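/- arXiv:2304.14239 — 4 statements merged into one kernel-verified Lean document; each statement's English description precedes it below -/
import Mathlib

section
/- For any multi-index α = (α₁,…,α_d) of nonnegative integers, the monomial x₁^{α₁}⋯x_d^{α_d} equals (1/|α|!) Σ_{p ≤ α} (−1)^{|α|−|p|} C(α₁,p₁)⋯C(α_d,p_d) (p₁x₁+⋯+p_d x_d)^{|α|}, where the sum is over all p ∈ ℤ₊ᵈ with pᵢ ≤ αᵢ for all i, and |α| = α₁+⋯+α_d. -/
/-!
Expanding `(∑ pᵢ xᵢ)^|α|` by the multinomial theorem and exchanging the sums, the coefficient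
of `x^β` factors as a product over `i` of the alternating sums
`∑_{k ≤ αᵢ} (-1)^(αᵢ-k) C(αᵢ,k) k^βᵢ`, which is the `αᵢ`-th forward difference of `r ↦ r^βᵢ`
at `0`. It vanishes when `βᵢ < αᵢ` and equals `αᵢ!` when `βᵢ = αᵢ`. Since `|β| = |α|`, some
`βᵢ < αᵢ` unless `β = α`, so only `x^α` survives, with coefficient `multinomial α * ∏ αᵢ! = |α|!`.
-/

open Finset Fintype fwdDiff

section

variable {R : Type*} [CommRing R]

lemma fwdDiff_iter_pow_apply_zero (m j : ℕ) :
    (Δ_[1])^[m] (fun r : R ↦ r ^ j) 0 =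
      ∑ k ∈ range (m + 1), (-1 : R) ^ (m - k) * m.choose k * (k : R) ^ j := by
  simp [fwdDiff_iter_eq_sum_shift, zsmul_eq_mul]

variable {ι : Type*} [Fintype ι]

lemma exists_lt_of_sum_eq_of_ne {α β : ι → ℕ} (hsum : ∑ i, β i = ∑ i, α i) (hne : β ≠ α) :
    ∃ i, β i < α i := by
  by_contra! hle
  exact hne (funext fun i ↦
    ((sum_eq_sum_iff_of_le fun i _ ↦ hle i).1 hsum.symm i (mem_univ i)).symm)

lemma prod_fwdDiff_iter_pow_apply_zero_of_ne {α β : ι → ℕ} (hsum : ∑ i, β i = ∑ i, α i)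
    (hne : β ≠ α) : ∏ i, (Δ_[1])^[α i] (fun r : R ↦ r ^ β i) 0 = 0 := by
  obtain ⟨i, hi⟩ := exists_lt_of_sum_eq_of_ne hsum hne
  exact prod_eq_zero (mem_univ i) (by rw [fwdDiff_iter_pow_eq_zero_of_lt hi, Pi.zero_apply])

lemma prod_fwdDiff_iter_pow_self_apply_zero (α : ι → ℕ) :
    ∏ i, (Δ_[1])^[α i] (fun r : R ↦ r ^ α i) 0 = ∏ i, ((α i).factorial : R) := by
  simp [fwdDiff_iter_eq_factorial]

lemma neg_one_pow_sum_sub_sum {α p : ι → ℕ} (hp : p ≤ α) :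
    (-1 : R) ^ (∑ i, α i - ∑ i, p i) = ∏ i, (-1 : R) ^ (α i - p i) := by
  rw [prod_pow_eq_pow_sum, sum_tsub_distrib univ fun i _ ↦ hp i]

variable [DecidableEq ι]

lemma signed_choose_mul_pow_sum_eq_sum_piAntidiag {α p : ι → ℕ} (hp : p ≤ α) (x : ι → R)
    (n : ℕ) :
    (-1 : R) ^ (∑ i, α i - ∑ i, p i) * (∏ i, ((α i).choose (p i) : R)) *
        (∑ i, (p i : R) * x i) ^ n =
      ∑ β ∈ piAntidiag univ n, (Nat.multinomial univ β : R) * (∏ i, x i ^ β i) *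
        ∏ i, (-1 : R) ^ (α i - p i) * (α i).choose (p i) * (p i : R) ^ β i := by
  rw [sum_pow_eq_sum_piAntidiag, mul_sum, neg_one_pow_sum_sub_sum hp]
  refine sum_congr rfl fun β _ ↦ ?_
  simp only [mul_pow, prod_mul_distrib]
  ring

theorem sum_signed_choose_mul_pow_sum_eq_factorial_mul_prod_pow (α : ι → ℕ) (x : ι → R) :
    ∑ p ∈ piFinset (fun i ↦ range (α i + 1)),
        (-1 : R) ^ (∑ i, α i - ∑ i, p i) * (∏ i, ((α i).choose (p i) : R)) *
          (∑ i, (p i : R) * x i) ^ (∑ i, α i) =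
      (∑ i, α i).factorial * ∏ i, x i ^ α i := by
  have hle : ∀ p ∈ piFinset (fun i ↦ range (α i + 1)), p ≤ α :=
    fun p hp i ↦ Nat.lt_succ_iff.1 (mem_range.1 (mem_piFinset.1 hp i))
  have hα : α ∈ piAntidiag univ (∑ i, α i) := by simp [mem_piAntidiag]
  calc _ = ∑ β ∈ piAntidiag univ (∑ i, α i), (Nat.multinomial univ β : R) *
            (∏ i, x i ^ β i) * ∏ i, (Δ_[1])^[α i] (fun r : R ↦ r ^ β i) 0 := by
        rw [sum_congr rfl fun p hp ↦
          signed_choose_mul_pow_sum_eq_sum_piAntidiag (hle p hp) x _, sum_comm]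
        simp only [← mul_sum, fwdDiff_iter_pow_apply_zero, prod_univ_sum]
    _ = Nat.multinomial univ α * (∏ i, x i ^ α i) * ∏ i, ((α i).factorial : R) := by
        rw [sum_eq_single_of_mem α hα fun β hβ hne ↦ by
          rw [prod_fwdDiff_iter_pow_apply_zero_of_ne (mem_piAntidiag.1 hβ).1 hne, mul_zero],
          prod_fwdDiff_iter_pow_self_apply_zero]
    _ = _ := by
        rw [← Nat.multinomial_spec univ α]
        push_cast
        ring

end

/-- Every monomial `x₁^{α₁}⋯x_d^{α_d}` is a sum of `|α|`-th powers of linear forms: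
`x^α = (1/|α|!) Σ_{p ≤ α} (−1)^{|α|−|p|} C(α₁,p₁)⋯C(α_d,p_d) (p₁x₁+⋯+p_d x_d)^{|α|}`. -/
theorem monomial_eq_sum_pow_linear_forms (d : ℕ) (α : Fin d → ℕ) (x : Fin d → ℝ) :
    ∏ i, x i ^ α i =
      (1 / (Nat.factorial (∑ i, α i) : ℝ)) *
        ∑ p ∈ Fintype.piFinset (fun i => Finset.range (α i + 1)),
          (-1 : ℝ) ^ ((∑ i, α i) - (∑ i, p i)) *
            (∏ i, ((α i).choose (p i) : ℝ)) *
            (∑ i, (p i : ℝ) * x i) ^ (∑ i, α i) := by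
  rw [sum_signed_choose_mul_pow_sum_eq_factorial_mul_prod_pow, one_div, inv_mul_cancel_left₀]
  exact_mod_cast (∑ i, α i).factorial_ne_zero
end

section
/- Let P ⊂ ℝᵈ be a polytope, u ∈ Sᵈ⁻¹, and let C be a connected component of the complement of {⟨u,v⟩ : v vertex of P} in ℝ. Then for all β₁, β₂ ∈ C with P ∩ H(βᵢ) nonempty and of dimension d−1, the polytopes P ∩ H(β₁) and P ∩ H(β₂) have the same normal fan (inside the hyperplane, after translating to a common hyperplane through the origin). -/
open RealInnerProductSpace

/-- The face of `K` in direction `w`: the set of points of `K` maximizing `⟨w,·⟩`. -/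
def argmaxFace {d : ℕ} (K : Set (EuclideanSpace ℝ (Fin d))) (w : EuclideanSpace ℝ (Fin d)) :
    Set (EuclideanSpace ℝ (Fin d)) :=
  {x ∈ K | ∀ y ∈ K, ⟪w, y⟫ ≤ ⟪w, x⟫}

/-!
Let `D` and `U` be the vertices of `P` below and above the component `C`. For `β ∈ C` the
section `P ∩ H(β)` is the convex hull of the points `c_{ab}(β)` where the segments `[a, b]`,
`a ∈ D`, `b ∈ U`, cross `H(β)`, and each `c_{ab}(β)` moves affinely with `β`. A face of the
section in direction `w` is thus determined by the set of pairs `(a, b)` whose crossing point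
maximises `⟪w, ·⟫`, and this set does not depend on `β ∈ C`: the maximum of `⟪w, ·⟫` over the
section is concave in `β` because `P` is convex, while `⟪w, c_{ab}(β)⟫` is affine, so if the
two agree at some level of the open set `C`, they agree on all of `C`.
-/

theorem Set.Finite.convexHull_extremePoints_convexHull {E : Type*} [AddCommGroup E]
    [Module ℝ E] [TopologicalSpace E] [T2Space E] [IsTopologicalAddGroup E]
    [ContinuousSMul ℝ E] [LocallyConvexSpace ℝ E] {s : Set E} (hs : s.Finite) :
    convexHull ℝ ((convexHull ℝ s).extremePoints ℝ) = convexHull ℝ s := by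
  conv_rhs =>
    rw [← closure_convexHull_extremePoints (hs.isCompact_convexHull ℝ) (convex_convexHull ℝ s)]
  exact ((hs.subset extremePoints_convexHull_subset).isClosed_convexHull ℝ).closure_eq.symm

theorem IsOpen.exists_mem_and_mem_openSegment {E : Type*} [AddCommGroup E] [Module ℝ E]
    [TopologicalSpace E] [IsTopologicalAddGroup E] [ContinuousSMul ℝ E] {C : Set E}
    (hC : IsOpen C) {x : E} (hx : x ∈ C) (y : E) : ∃ z ∈ C, x ∈ openSegment ℝ y z := by
  have hlim :
      Filter.Tendsto (fun δ : ℝ => x + δ • (x - y)) (nhdsWithin 0 (Set.Ioi 0)) (nhds x) := by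
    have hcont : Continuous fun δ : ℝ => x + δ • (x - y) := by fun_prop
    simpa using (hcont.tendsto 0).mono_left nhdsWithin_le_nhds
  obtain ⟨δ, hδC, hδ⟩ := ((hlim.eventually (hC.mem_nhds hx)).and self_mem_nhdsWithin).exists
  have hδ' : (0 : ℝ) < 1 + δ := by linarith [show (0 : ℝ) < δ from hδ]
  refine ⟨_, hδC, δ / (1 + δ), 1 / (1 + δ), div_pos hδ hδ', div_pos one_pos hδ',
    by field_simp; ring, ?_⟩
  match_scalars
  · field_simp
    ring
  · field_simp

theorem IsPreconnected.forall_lt_or_forall_gt_of_notMem {C : Set ℝ} (hC : IsPreconnected C)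
    {γ : ℝ} (hγ : γ ∉ C) : (∀ β ∈ C, γ < β) ∨ (∀ β ∈ C, β < γ) := by
  by_contra! h
  obtain ⟨⟨β, hβ, hβγ⟩, β', hβ', hγβ'⟩ := h
  exact hγ (hC.ordConnected.out hβ hβ' ⟨hβγ, hγβ'⟩)

theorem Set.Finite.exists_finset_split_of_isPreconnected {α : Type*} {W : Set α} (hW : W.Finite)
    {f : α → ℝ} {C : Set ℝ} (hC : IsPreconnected C) (hWC : ∀ v ∈ W, f v ∉ C) :
    ∃ D U : Finset α, ↑D ∪ ↑U = W ∧
      (∀ a ∈ D, ∀ β ∈ C, f a < β) ∧ (∀ b ∈ U, ∀ β ∈ C, β < f b) := by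
  classical
  refine ⟨hW.toFinset.filter fun v => ∀ β ∈ C, f v < β,
    hW.toFinset.filter fun v => ∀ β ∈ C, β < f v, ?_,
    fun a ha => (Finset.mem_filter.1 ha).2, fun b hb => (Finset.mem_filter.1 hb).2⟩
  ext v
  simpa [← and_or_left] using fun hv => hC.forall_lt_or_forall_gt_of_notMem (hWC v hv)

section CrossingPoint

variable {F : Type*} [NormedAddCommGroup F] [InnerProductSpace ℝ F]

theorem inner_le_of_mem_convexHull {s : Set F} {w : F} {c : ℝ} (h : ∀ y ∈ s, ⟪w, y⟫ ≤ c)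
    {x : F} (hx : x ∈ convexHull ℝ s) : ⟪w, x⟫ ≤ c :=
  convexHull_min h (convex_halfSpace_le (innerSL ℝ w).isLinear c) hx

/-- The point where the line through `p.1` and `p.2` meets the hyperplane `⟪u, ·⟫ = β`. -/
noncomputable def crossingPoint (u : F) (β : ℝ) (p : F × F) : F :=
  p.1 + ((β - ⟪u, p.1⟫) / (⟪u, p.2⟫ - ⟪u, p.1⟫)) • (p.2 - p.1)

variable {u : F} {β : ℝ} {a b : F}

theorem inner_crossingPoint_self (hab : ⟪u, a⟫ ≠ ⟪u, b⟫) :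
    ⟪u, crossingPoint u β (a, b)⟫ = β := by
  have : ⟪u, b⟫ - ⟪u, a⟫ ≠ 0 := sub_ne_zero.2 hab.symm
  simp only [crossingPoint, inner_add_right, real_inner_smul_right, inner_sub_right]
  field_simp
  ring

theorem sub_smul_crossingPoint (hab : ⟪u, a⟫ ≠ ⟪u, b⟫) :
    (⟪u, b⟫ - ⟪u, a⟫) • crossingPoint u β (a, b) = (⟪u, b⟫ - β) • a + (β - ⟪u, a⟫) • b := by
  have : ⟪u, b⟫ - ⟪u, a⟫ ≠ 0 := sub_ne_zero.2 hab.symm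
  simp only [crossingPoint, smul_add, smul_smul, mul_div_cancel₀ _ this]
  module

theorem crossingPoint_mem_segment (ha : ⟪u, a⟫ < β) (hb : β < ⟪u, b⟫) :
    crossingPoint u β (a, b) ∈ segment ℝ a b := by
  rw [segment_eq_image']
  exact ⟨_, ⟨div_nonneg (by linarith) (by linarith),
    div_le_one_of_le₀ (by linarith) (by linarith)⟩, rfl⟩

theorem inner_crossingPoint_affineCombination (w : F) (p : F × F) {s t β' : ℝ}
    (hst : s + t = 1) :
    ⟪w, crossingPoint u (s * β + t * β') p⟫ =
      s * ⟪w, crossingPoint u β p⟫ + t * ⟪w, crossingPoint u β' p⟫ := by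
  simp only [crossingPoint, inner_add_right, real_inner_smul_right]
  rw [show s * β + t * β' - ⟪u, p.1⟫ = s * (β - ⟪u, p.1⟫) + t * (β' - ⟪u, p.1⟫) by
    linear_combination ⟪u, p.1⟫ * hst, add_div, mul_div_assoc, mul_div_assoc]
  linear_combination (-⟪w, p.1⟫) * hst

/-- Up to normalisation, the weight of the pair `p` when a point `∑ v, w v • v` of the
hyperplane `⟪u, ·⟫ = β` is written as a combination of the crossing points
`crossingPoint u β p`. -/
def crossingWeight (u : F) (w : F → ℝ) (p : F × F) : ℝ :=
  w p.1 * w p.2 * (⟪u, p.2⟫ - ⟪u, p.1⟫)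

section Balanced

variable {D U : Finset F} {w : F → ℝ} (hw₁ : ∑ a ∈ D, w a + ∑ b ∈ U, w b = 1)
  (hbal : ∑ a ∈ D, w a * (β - ⟪u, a⟫) = ∑ b ∈ U, w b * (⟪u, b⟫ - β))
include hw₁ hbal

theorem sum_crossingWeight :
    ∑ p ∈ D ×ˢ U, crossingWeight u w p = ∑ a ∈ D, w a * (β - ⟪u, a⟫) := by
  set Z := ∑ a ∈ D, w a * (β - ⟪u, a⟫) with hZ
  calc ∑ p ∈ D ×ˢ U, crossingWeight u w p
      = ∑ a ∈ D, ∑ b ∈ U, (w a * (w b * (⟪u, b⟫ - β)) + w a * (β - ⟪u, a⟫) * w b) := by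
        rw [Finset.sum_product]; congr! 2; simp only [crossingWeight]; ring
    _ = (∑ a ∈ D, w a) * Z + Z * ∑ b ∈ U, w b := by
        simp only [Finset.sum_add_distrib, ← Finset.mul_sum, ← Finset.sum_mul, ← hbal, ← hZ]
    _ = Z := by linear_combination Z * hw₁

theorem centerMass_crossingWeight_crossingPoint
    (hsep : ∀ a ∈ D, ∀ b ∈ U, ⟪u, a⟫ ≠ ⟪u, b⟫) (hne : ∑ a ∈ D, w a * (β - ⟪u, a⟫) ≠ 0) :
    (D ×ˢ U).centerMass (crossingWeight u w) (crossingPoint u β) =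
      ∑ a ∈ D, w a • a + ∑ b ∈ U, w b • b := by
  set Z := ∑ a ∈ D, w a * (β - ⟪u, a⟫) with hZ
  have hcomb : ∑ p ∈ D ×ˢ U, crossingWeight u w p • crossingPoint u β p =
      Z • (∑ a ∈ D, w a • a + ∑ b ∈ U, w b • b) := by
    calc ∑ p ∈ D ×ˢ U, crossingWeight u w p • crossingPoint u β p
        = ∑ a ∈ D, ∑ b ∈ U,
            ((w b * (⟪u, b⟫ - β)) • (w a • a) + (w a * (β - ⟪u, a⟫)) • (w b • b)) := by
          rw [Finset.sum_product]
          refine Finset.sum_congr rfl fun a ha => Finset.sum_congr rfl fun b hb => ?_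
          rw [crossingWeight, mul_smul, sub_smul_crossingPoint (hsep a ha b hb)]
          module
      _ = Z • (∑ a ∈ D, w a • a + ∑ b ∈ U, w b • b) := by
          simp only [Finset.sum_add_distrib, ← Finset.smul_sum, ← Finset.sum_smul, ← hbal, ← hZ,
            smul_add]
  rw [Finset.centerMass, sum_crossingWeight hw₁ hbal, hcomb, inv_smul_smul₀ hne]

end Balanced

theorem convexHull_inter_hyperplane_subset_convexHull_crossingPoint {D U : Finset F}
    (hD : ∀ a ∈ D, ⟪u, a⟫ < β) (hU : ∀ b ∈ U, β < ⟪u, b⟫) :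
    convexHull ℝ (↑D ∪ ↑U) ∩ {x | ⟪u, x⟫ = β} ⊆
      convexHull ℝ (crossingPoint u β '' (↑D ×ˢ ↑U)) := by
  classical
  rintro _ ⟨hx, hxβ⟩
  rw [← Finset.coe_union, Finset.mem_convexHull'] at hx
  obtain ⟨w, hw₀, hw₁, rfl⟩ := hx
  have hdisj : Disjoint D U :=
    Finset.disjoint_left.2 fun v hvD hvU => (hD v hvD).not_gt (hU v hvU)
  obtain ⟨v, hv, hwv⟩ : ∃ v ∈ D ∪ U, 0 < w v :=
    Finset.exists_lt_of_sum_lt (f := fun _ => 0) (by simp [hw₁])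
  rw [Finset.sum_union hdisj] at hw₁ hxβ ⊢
  simp only [Set.mem_ofPred_eq, inner_add_right, inner_sum, real_inner_smul_right] at hxβ
  have hbal : ∑ a ∈ D, w a * (β - ⟪u, a⟫) = ∑ b ∈ U, w b * (⟪u, b⟫ - β) := by
    simp only [mul_sub, Finset.sum_sub_distrib, ← Finset.sum_mul]
    linear_combination β * hw₁ - hxβ
  have hpos : 0 < ∑ a ∈ D, w a * (β - ⟪u, a⟫) := by
    rcases Finset.mem_union.1 hv with hvD | hvU
    · exact (mul_pos hwv (sub_pos.2 (hD v hvD))).trans_le <|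
        Finset.single_le_sum (f := fun a => w a * (β - ⟪u, a⟫)) (fun a ha =>
          mul_nonneg (hw₀ a (Finset.mem_union_left _ ha)) (sub_pos.2 (hD a ha)).le) hvD
    · exact hbal ▸ (mul_pos hwv (sub_pos.2 (hU v hvU))).trans_le
        (Finset.single_le_sum (f := fun b => w b * (⟪u, b⟫ - β)) (fun b hb =>
          mul_nonneg (hw₀ b (Finset.mem_union_right _ hb)) (sub_pos.2 (hU b hb)).le) hvU)
  have hsep : ∀ a ∈ D, ∀ b ∈ U, ⟪u, a⟫ ≠ ⟪u, b⟫ := fun a ha b hb => ((hD a ha).trans (hU b hb)).ne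
  rw [← centerMass_crossingWeight_crossingPoint hw₁ hbal hsep hpos.ne']
  refine (D ×ˢ U).centerMass_mem_convexHull (fun p hp => ?_)
    (sum_crossingWeight hw₁ hbal ▸ hpos) fun p hp => ?_
  · obtain ⟨ha, hb⟩ := Finset.mem_product.1 hp
    exact mul_nonneg (mul_nonneg (hw₀ _ (Finset.mem_union_left _ ha))
      (hw₀ _ (Finset.mem_union_right _ hb))) (sub_nonneg.2 ((hD _ ha).trans (hU _ hb)).le)
  · exact Set.mem_image_of_mem _ (by simpa using hp)

theorem crossingPoint_mem_convexHull_inter_hyperplane {D U : Finset F}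
    (hD : ∀ a ∈ D, ⟪u, a⟫ < β) (hU : ∀ b ∈ U, β < ⟪u, b⟫) {p : F × F}
    (hp : p ∈ (↑D ×ˢ ↑U : Set (F × F))) :
    crossingPoint u β p ∈ convexHull ℝ (↑D ∪ ↑U) ∩ {x | ⟪u, x⟫ = β} :=
  ⟨segment_subset_convexHull (Set.mem_union_left _ hp.1) (Set.mem_union_right _ hp.2)
      (crossingPoint_mem_segment (hD _ hp.1) (hU _ hp.2)),
    inner_crossingPoint_self ((hD _ hp.1).trans (hU _ hp.2)).ne⟩

theorem convexHull_inter_hyperplane_eq_convexHull_crossingPoint {D U : Finset F}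
    (hD : ∀ a ∈ D, ⟪u, a⟫ < β) (hU : ∀ b ∈ U, β < ⟪u, b⟫) :
    convexHull ℝ (↑D ∪ ↑U) ∩ {x | ⟪u, x⟫ = β} =
      convexHull ℝ (crossingPoint u β '' (↑D ×ˢ ↑U)) := by
  refine (convexHull_inter_hyperplane_subset_convexHull_crossingPoint hD hU).antisymm <|
    convexHull_min ?_ <|
      (convex_convexHull ℝ _).inter (convex_hyperplane (innerSL ℝ u).isLinear β)
  rintro _ ⟨p, hp, rfl⟩
  exact crossingPoint_mem_convexHull_inter_hyperplane hD hU hp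

/-- `β` lies strictly between `β'` and some `β'' ∈ C`. Being maximal among the crossing points,
`p` is maximal on the whole section at `β`, which contains the combination of the sections at `β'`
and `β''`; since `⟪w, crossingPoint u · p⟫` is affine, `p` must be maximal at `β'`. -/
theorem isMaxOn_crossingPoint_of_isMaxOn {C : Set ℝ} (hC : IsOpen C) {D U : Finset F}
    (hD : ∀ a ∈ D, ∀ β ∈ C, ⟪u, a⟫ < β) (hU : ∀ b ∈ U, ∀ β ∈ C, β < ⟪u, b⟫) {w : F}
    {p : F × F} (hp : p ∈ (↑D ×ˢ ↑U : Set (F × F))) {β' : ℝ} (hβ : β ∈ C) (hβ' : β' ∈ C)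
    (hmax : IsMaxOn (fun q => ⟪w, crossingPoint u β q⟫) (↑D ×ˢ ↑U) p) :
    IsMaxOn (fun q => ⟪w, crossingPoint u β' q⟫) (↑D ×ˢ ↑U) p := by
  obtain ⟨β'', hβ'', s, t, hs, ht, hst, rfl⟩ := hC.exists_mem_and_mem_openSegment hβ β'
  obtain ⟨r, hr, hrmax⟩ := Set.exists_max_image _ (fun q => ⟪w, crossingPoint u β'' q⟫)
    (D.finite_toSet.prod U.finite_toSet) ⟨p, hp⟩
  rw [isMaxOn_iff] at hmax ⊢
  intro q hq
  have hz : s • crossingPoint u β' q + t • crossingPoint u β'' r ∈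
      convexHull ℝ (↑D ∪ ↑U) ∩ {x | ⟪u, x⟫ = s • β' + t • β''} := by
    have hq' := crossingPoint_mem_convexHull_inter_hyperplane (hD · · _ hβ') (hU · · _ hβ') hq
    have hr' := crossingPoint_mem_convexHull_inter_hyperplane (hD · · _ hβ'') (hU · · _ hβ'') hr
    have hqβ' : ⟪u, crossingPoint u β' q⟫ = β' := hq'.2
    have hrβ'' : ⟪u, crossingPoint u β'' r⟫ = β'' := hr'.2
    refine ⟨convex_convexHull ℝ _ hq'.1 hr'.1 hs.le ht.le hst, ?_⟩
    simp only [Set.mem_ofPred_eq, inner_add_right, real_inner_smul_right, hqβ', hrβ'',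
      smul_eq_mul]
  have hsection := inner_le_of_mem_convexHull (Set.forall_mem_image.2 hmax)
    (convexHull_inter_hyperplane_subset_convexHull_crossingPoint (hD · · _ hβ) (hU · · _ hβ) hz)
  simp only [smul_eq_mul, inner_add_right, real_inner_smul_right,
    inner_crossingPoint_affineCombination w p hst] at hsection
  have hpr := mul_le_mul_of_nonneg_left (hrmax p hp) ht.le
  exact le_of_mul_le_mul_left (by linarith) hs

end CrossingPoint

section ArgmaxFace

variable {d : ℕ}

theorem Convex.argmaxFace {K : Set (EuclideanSpace ℝ (Fin d))} (hK : Convex ℝ K)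
    (w : EuclideanSpace ℝ (Fin d)) : Convex ℝ (argmaxFace K w) := by
  intro x hx y hy a b ha hb hab
  refine ⟨hK hx.1 hy.1 ha hb hab, fun z hz => ?_⟩
  have hz' : ⟪w, z⟫ = a * ⟪w, z⟫ + b * ⟪w, z⟫ := by rw [← add_mul, hab, one_mul]
  rw [inner_add_right, real_inner_smul_right, real_inner_smul_right]
  linarith [mul_le_mul_of_nonneg_left (hx.2 z hz) ha, mul_le_mul_of_nonneg_left (hy.2 z hz) hb]

theorem mem_argmaxFace_convexHull_iff {K : Set (EuclideanSpace ℝ (Fin d))}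
    {w x : EuclideanSpace ℝ (Fin d)} (hx : x ∈ K) :
    x ∈ argmaxFace (convexHull ℝ K) w ↔ x ∈ argmaxFace K w :=
  ⟨fun h => ⟨hx, fun y hy => h.2 y (subset_convexHull ℝ K hy)⟩,
    fun h => ⟨subset_convexHull ℝ K hx, fun _ hy => inner_le_of_mem_convexHull h.2 hy⟩⟩

theorem argmaxFace_convexHull {T : Set (EuclideanSpace ℝ (Fin d))} (hT : T.Finite)
    (w : EuclideanSpace ℝ (Fin d)) :
    argmaxFace (convexHull ℝ T) w = convexHull ℝ (argmaxFace T w) := by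
  classical
  refine subset_antisymm ?_ <| convexHull_min
    (fun x hx => (mem_argmaxFace_convexHull_iff hx.1).2 hx) ((convex_convexHull ℝ T).argmaxFace w)
  rintro x ⟨hx, hxmax⟩
  lift T to Finset (EuclideanSpace ℝ (Fin d)) using hT
  obtain ⟨μ, hμ₀, hμ₁, rfl⟩ := Finset.mem_convexHull'.1 hx
  have hle : ∀ t ∈ T, ⟪w, t⟫ ≤ ⟪w, ∑ s ∈ T, μ s • s⟫ := fun t ht =>
    hxmax t (subset_convexHull ℝ _ ht)
  have hgap : ∑ t ∈ T, μ t * (⟪w, ∑ s ∈ T, μ s • s⟫ - ⟪w, t⟫) = 0 := by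
    simp only [mul_sub, Finset.sum_sub_distrib, ← Finset.sum_mul, hμ₁, one_mul, inner_sum,
      real_inner_smul_right, sub_self]
  have hsupp : ∀ t ∈ T, μ t ≠ 0 → t ∈ argmaxFace ↑T w := fun t ht hμt => by
    have := (Finset.sum_eq_zero_iff_of_nonneg fun s hs =>
      mul_nonneg (hμ₀ s hs) (sub_nonneg.2 (hle s hs))).1 hgap t ht
    have heq : ⟪w, t⟫ = ⟪w, ∑ s ∈ T, μ s • s⟫ := by
      linarith [(mul_eq_zero.1 this).resolve_left hμt]
    exact ⟨ht, fun y hy => heq ▸ hle y hy⟩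
  rw [← Finset.sum_filter_of_ne fun t ht h => hsupp t ht (left_ne_zero_of_smul h)]
  rw [← Finset.sum_filter_of_ne hsupp] at hμ₁
  exact (convex_convexHull ℝ _).sum_mem (fun t ht => hμ₀ t (Finset.mem_filter.1 ht).1) hμ₁
    fun t ht => subset_convexHull ℝ _ (Finset.mem_filter.1 ht).2

theorem argmaxFace_convexHull_eq_iff {T : Set (EuclideanSpace ℝ (Fin d))} (hT : T.Finite)
    {w₁ w₂ : EuclideanSpace ℝ (Fin d)} :
    argmaxFace (convexHull ℝ T) w₁ = argmaxFace (convexHull ℝ T) w₂ ↔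
      argmaxFace T w₁ = argmaxFace T w₂ := by
  refine ⟨fun h => ?_, fun h => by rw [argmaxFace_convexHull hT, argmaxFace_convexHull hT, h]⟩
  have hface : ∀ w, argmaxFace T w = argmaxFace (convexHull ℝ T) w ∩ T := fun w =>
    Set.ext fun x => ⟨fun hx => ⟨(mem_argmaxFace_convexHull_iff hx.1).2 hx, hx.1⟩,
      fun hx => (mem_argmaxFace_convexHull_iff hx.2).1 hx.1⟩
  rw [hface, hface, h]

theorem argmaxFace_image_eq_iff {ι : Type*} {g : ι → EuclideanSpace ℝ (Fin d)} {s : Set ι}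
    {w₁ w₂ : EuclideanSpace ℝ (Fin d)} :
    argmaxFace (g '' s) w₁ = argmaxFace (g '' s) w₂ ↔
      ∀ i ∈ s, IsMaxOn (fun j => ⟪w₁, g j⟫) s i ↔ IsMaxOn (fun j => ⟪w₂, g j⟫) s i := by
  have hmem : ∀ w, ∀ i ∈ s, g i ∈ argmaxFace (g '' s) w ↔ IsMaxOn (fun j => ⟪w, g j⟫) s i :=
    fun w i hi => by
      rw [isMaxOn_iff]
      exact ⟨fun h => Set.forall_mem_image.1 h.2,
        fun h => ⟨Set.mem_image_of_mem g hi, Set.forall_mem_image.2 h⟩⟩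
  refine ⟨fun h i hi => by rw [← hmem _ i hi, ← hmem _ i hi, h], fun h => Set.ext fun x => ?_⟩
  constructor <;> rintro hx <;> obtain ⟨i, hi, rfl⟩ := hx.1
  · exact (hmem _ i hi).2 ((h i hi).1 ((hmem _ i hi).1 hx))
  · exact (hmem _ i hi).2 ((h i hi).2 ((hmem _ i hi).1 hx))

theorem argmaxFace_crossingPoint_image_eq_iff {u : EuclideanSpace ℝ (Fin d)} {C : Set ℝ}
    (hC : IsOpen C) {D U : Finset (EuclideanSpace ℝ (Fin d))}
    (hD : ∀ a ∈ D, ∀ β ∈ C, ⟪u, a⟫ < β) (hU : ∀ b ∈ U, ∀ β ∈ C, β < ⟪u, b⟫) {β β' : ℝ}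
    (hβ : β ∈ C) (hβ' : β' ∈ C) {w₁ w₂ : EuclideanSpace ℝ (Fin d)} :
    argmaxFace (crossingPoint u β '' (↑D ×ˢ ↑U)) w₁ =
        argmaxFace (crossingPoint u β '' (↑D ×ˢ ↑U)) w₂ ↔
      argmaxFace (crossingPoint u β' '' (↑D ×ˢ ↑U)) w₁ =
        argmaxFace (crossingPoint u β' '' (↑D ×ˢ ↑U)) w₂ := by
  have hiff : ∀ w, ∀ p ∈ (↑D ×ˢ ↑U : Set _),
      IsMaxOn (fun q => ⟪w, crossingPoint u β q⟫) (↑D ×ˢ ↑U) p ↔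
        IsMaxOn (fun q => ⟪w, crossingPoint u β' q⟫) (↑D ×ˢ ↑U) p := fun w p hp =>
    ⟨isMaxOn_crossingPoint_of_isMaxOn hC hD hU hp hβ hβ',
      isMaxOn_crossingPoint_of_isMaxOn hC hD hU hp hβ' hβ⟩
  simp only [argmaxFace_image_eq_iff]
  exact forall₂_congr fun p hp => by rw [hiff w₁ p hp, hiff w₂ p hp]

end ArgmaxFace

theorem parallel_sections_normally_equivalent_general {d : ℕ} (V : Finset (EuclideanSpace ℝ (Fin d)))
    (P : Set (EuclideanSpace ℝ (Fin d)))
    (hP : P = convexHull ℝ (V : Set (EuclideanSpace ℝ (Fin d))))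
    (u : EuclideanSpace ℝ (Fin d))
    (S : Set ℝ) (hS : S = {β : ℝ | ∀ v ∈ Set.extremePoints ℝ P, ⟪u, v⟫ ≠ β})
    (β₁ β₂ : ℝ) (hβ₂ : β₂ ∈ connectedComponentIn S β₁)
    (Q₁ Q₂ : Set (EuclideanSpace ℝ (Fin d)))
    (hQ₁ : Q₁ = P ∩ {x | ⟪u, x⟫ = β₁}) (hQ₂ : Q₂ = P ∩ {x | ⟪u, x⟫ = β₂}) :
    ∀ w₁ w₂ : EuclideanSpace ℝ (Fin d), ⟪u, w₁⟫ = 0 → ⟪u, w₂⟫ = 0 →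
      (argmaxFace Q₁ w₁ = argmaxFace Q₁ w₂ ↔ argmaxFace Q₂ w₁ = argmaxFace Q₂ w₂) := by
  intro w₁ w₂ _ _
  set C := connectedComponentIn S β₁
  have hfin : (P.extremePoints ℝ).Finite :=
    V.finite_toSet.subset (hP ▸ extremePoints_convexHull_subset)
  have hC : IsOpen C := by
    have hS' : S = ((fun v => ⟪u, v⟫) '' P.extremePoints ℝ)ᶜ := by ext; simp [hS]
    exact (hS' ▸ (hfin.image _).isClosed.isOpen_compl).connectedComponentIn
  have hβ₁ : β₁ ∈ C := mem_connectedComponentIn (connectedComponentIn_nonempty_iff.1 ⟨β₂, hβ₂⟩)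
  obtain ⟨D, U, hDU, hD, hU⟩ := hfin.exists_finset_split_of_isPreconnected
    isPreconnected_connectedComponentIn fun v hv h =>
      (hS ▸ connectedComponentIn_subset S β₁ h) v hv rfl
  have hfinite : ∀ β, (crossingPoint u β '' (↑D ×ˢ ↑U)).Finite := fun _ =>
    (D.finite_toSet.prod U.finite_toSet).image _
  have hPDU : P = convexHull ℝ (↑D ∪ ↑U) := by
    rw [hDU, hP, V.finite_toSet.convexHull_extremePoints_convexHull]
  subst hQ₁ hQ₂
  rw [hPDU,
    convexHull_inter_hyperplane_eq_convexHull_crossingPoint (hD · · β₁ hβ₁) (hU · · β₁ hβ₁),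
    convexHull_inter_hyperplane_eq_convexHull_crossingPoint (hD · · β₂ hβ₂) (hU · · β₂ hβ₂),
    argmaxFace_convexHull_eq_iff (hfinite β₁), argmaxFace_convexHull_eq_iff (hfinite β₂)]
  exact argmaxFace_crossingPoint_image_eq_iff hC hD hU hβ₁ hβ₂

/-- For a fixed unit direction `u` and `β₁, β₂` in the same connected component of the
complement of `{⟨u,v⟩ : v vertex of P}`, the full-dimensional parallel sections
`P ∩ H(β₁)` and `P ∩ H(β₂)` are normally equivalent: their normal fans inside the hyperplane
`u^⊥` coincide, i.e. two directions `w₁, w₂ ∈ u^⊥` select the same face of `P ∩ H(β₁)` if and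
only if they select the same face of `P ∩ H(β₂)`. -/
theorem parallel_sections_normally_equivalent {d : ℕ} (V : Finset (EuclideanSpace ℝ (Fin d)))
    (P : Set (EuclideanSpace ℝ (Fin d)))
    (hP : P = convexHull ℝ (V : Set (EuclideanSpace ℝ (Fin d))))
    (u : EuclideanSpace ℝ (Fin d)) (hu : ‖u‖ = 1)
    (S : Set ℝ) (hS : S = {β : ℝ | ∀ v ∈ Set.extremePoints ℝ P, ⟪u, v⟫ ≠ β})
    (β₁ β₂ : ℝ) (hβ₁ : β₁ ∈ S) (hβ₂ : β₂ ∈ connectedComponentIn S β₁)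
    (Q₁ Q₂ : Set (EuclideanSpace ℝ (Fin d)))
    (hQ₁ : Q₁ = P ∩ {x | ⟪u, x⟫ = β₁}) (hQ₂ : Q₂ = P ∩ {x | ⟪u, x⟫ = β₂})
    (hne₁ : Q₁.Nonempty) (hne₂ : Q₂.Nonempty)
    (hdim₁ : Module.finrank ℝ (vectorSpan ℝ Q₁) = d - 1)
    (hdim₂ : Module.finrank ℝ (vectorSpan ℝ Q₂) = d - 1) :
    ∀ w₁ w₂ : EuclideanSpace ℝ (Fin d), ⟪u, w₁⟫ = 0 → ⟪u, w₂⟫ = 0 →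
      (argmaxFace Q₁ w₁ = argmaxFace Q₁ w₂ ↔ argmaxFace Q₂ w₁ = argmaxFace Q₂ w₂) :=
  parallel_sections_normally_equivalent_general V P hP u S hS β₁ β₂ hβ₂ Q₁ Q₂ hQ₁ hQ₂
end

section
/- An arrangement of m hyperplanes in ℝᵈ has at most Σ_{i=0}^{d} C(m,i) connected components in its complement (i.e., at most Σ_{i=0}^{d} C(m,i) full-dimensional open regions). -/
/-!
A region is a cell on which each affine form cutting out a hyperplane has a fixed nonzero sign, so
regions inject into the sign vectors realized off the hyperplanes. These are counted by
deletion–restriction: a sign vector of the other forms extends in two ways only if it is realized on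
both sides of the deleted hyperplane `H`, hence, by convexity of cells, on `H` itself, which carries
an arrangement of one hyperplane fewer in one dimension less. Pascal's rule closes the induction.
-/

open Module Finset SignType

theorem Nat.sum_range_succ_choose_succ (m n : ℕ) :
    ∑ i ∈ range (n + 1), (m + 1).choose i =
      ∑ i ∈ range (n + 1), m.choose i + ∑ i ∈ range n, m.choose i := by
  rw [sum_range_succ' _ n, sum_range_succ' (fun i => m.choose i) n]
  simp only [Nat.choose_succ_succ, sum_add_distrib, Nat.choose_zero_right]
  ring

theorem IsPreconnected.sign_eq {X α : Type*} [TopologicalSpace X] [Zero α] [LinearOrder α]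
    [TopologicalSpace α] [OrderClosedTopology α] {s : Set X} (hs : IsPreconnected s)
    {g : X → α} (hg : ContinuousOn g s) (h0 : ∀ x ∈ s, g x ≠ 0) {x y : X} (hx : x ∈ s)
    (hy : y ∈ s) : sign (g y) = sign (g x) := by
  have no_sign_change : ∀ a ∈ s, ∀ b ∈ s, g a < 0 → 0 < g b → False := fun a ha b hb hna hpb => by
    obtain ⟨c, hc, hc0⟩ := hs.intermediate_value ha hb hg ⟨hna.le, hpb.le⟩
    exact h0 c hc hc0
  rcases (h0 x hx).lt_or_gt with hxn | hxp <;> rcases (h0 y hy).lt_or_gt with hyn | hyp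
  · rw [sign_neg hxn, sign_neg hyn]
  · exact (no_sign_change x hx y hy hxn hyp).elim
  · exact (no_sign_change y hy x hx hyn hxp).elim
  · rw [sign_pos hxp, sign_pos hyp]

section SignPatterns

variable {𝕜 V ι : Type*} [Field 𝕜] [LinearOrder 𝕜] [AddCommGroup V] [Module 𝕜 V]

def signVector (f : ι → V →ᵃ[𝕜] 𝕜) (x : V) : ι → SignType := fun i => sign (f i x)

def signPatterns (f : ι → V →ᵃ[𝕜] 𝕜) : Set (ι → SignType) :=
  signVector f '' {x | ∀ i, f i x ≠ 0}

theorem ne_zero_of_mem_signPatterns {f : ι → V →ᵃ[𝕜] 𝕜} {σ : ι → SignType}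
    (hσ : σ ∈ signPatterns f) (i : ι) : σ i ≠ 0 := by
  obtain ⟨x, hx, rfl⟩ := hσ
  exact sign_ne_zero.2 (hx i)

theorem tail_mem_signPatterns {m : ℕ} {f : Fin (m + 1) → V →ᵃ[𝕜] 𝕜} {σ : Fin (m + 1) → SignType}
    (hσ : σ ∈ signPatterns f) : Fin.tail σ ∈ signPatterns (Fin.tail f) := by
  obtain ⟨x, hx, rfl⟩ := hσ
  exact ⟨x, fun i => hx i.succ, rfl⟩

variable [IsStrictOrderedRing 𝕜]

theorem convex_signVector_preimage (f : ι → V →ᵃ[𝕜] 𝕜) (σ : ι → SignType) :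
    Convex 𝕜 (signVector f ⁻¹' {σ}) := by
  have hcell : signVector f ⁻¹' {σ} = ⋂ i, f i ⁻¹' (sign ⁻¹' {σ i}) := by
    ext x
    simp [signVector, funext_iff]
  rw [hcell]
  exact convex_iInter fun i => (Set.ordConnected_preimage sign).convex.affine_preimage (f i)

theorem AffineMap.exists_lineMap_eq_zero (h : V →ᵃ[𝕜] 𝕜) {x y : V} (hx : h x < 0)
    (hy : 0 < h y) : ∃ t ∈ Set.Icc (0 : 𝕜) 1, h (AffineMap.lineMap x y t) = 0 := by
  refine ⟨h x / (h x - h y), ⟨div_nonneg_of_nonpos hx.le (by linarith), ?_⟩, ?_⟩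
  · rw [div_le_one_of_neg (by linarith)]
    linarith
  · have hne : h x - h y ≠ 0 := (by linarith : h x - h y < 0).ne
    rw [AffineMap.apply_lineMap, AffineMap.lineMap_apply_ring']
    field_simp
    ring

theorem exists_zero_of_cons_mem_signPatterns {m : ℕ} {f : Fin (m + 1) → V →ᵃ[𝕜] 𝕜}
    {τ : Fin m → SignType} (hpos : Fin.cons 1 τ ∈ signPatterns f)
    (hneg : Fin.cons (-1) τ ∈ signPatterns f) :
    ∃ z, f 0 z = 0 ∧ signVector (Fin.tail f) z = τ := by
  obtain ⟨y, -, hy⟩ := hpos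
  obtain ⟨x, -, hx⟩ := hneg
  have hfx : f 0 x < 0 := sign_eq_neg_one_iff.1 (congrFun hx 0)
  have hfy : 0 < f 0 y := sign_eq_one_iff.1 (congrFun hy 0)
  obtain ⟨t, ht, hzero⟩ := (f 0).exists_lineMap_eq_zero hfx hfy
  exact ⟨AffineMap.lineMap x y t, hzero, (convex_signVector_preimage (Fin.tail f) τ).lineMap_mem
    (congrArg Fin.tail hx) (congrArg Fin.tail hy) ht⟩

def AffineMap.zeroSetParam (h : V →ᵃ[𝕜] 𝕜) (z : V) : LinearMap.ker h.linear →ᵃ[𝕜] V :=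
  (LinearMap.ker h.linear).subtype.toAffineMap + AffineMap.const 𝕜 _ z

theorem mem_signPatterns_comp_zeroSetParam {m : ℕ} {f : Fin (m + 1) → V →ᵃ[𝕜] 𝕜}
    {τ : Fin m → SignType} (hpos : Fin.cons 1 τ ∈ signPatterns f)
    (hneg : Fin.cons (-1) τ ∈ signPatterns f) {z : V} (hz : f 0 z = 0) :
    τ ∈ signPatterns fun i => (Fin.tail f i).comp ((f 0).zeroSetParam z) := by
  obtain ⟨z', hz', hτ⟩ := exists_zero_of_cons_mem_signPatterns hpos hneg
  have hker : z' - z ∈ LinearMap.ker (f 0).linear := by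
    rw [LinearMap.mem_ker, ← vsub_eq_sub, AffineMap.linearMap_vsub, hz, hz', vsub_self]
  have hval : (f 0).zeroSetParam z ⟨z' - z, hker⟩ = z' := by
    simp [AffineMap.zeroSetParam]
  refine ⟨⟨z' - z, hker⟩, fun i => ?_, ?_⟩
  · rw [AffineMap.comp_apply, hval]
    simpa [← hτ, signVector] using ne_zero_of_mem_signPatterns hpos i.succ
  · rw [← hτ]
    ext i
    simp only [signVector, AffineMap.comp_apply, hval]

theorem ncard_signPatterns_le [FiniteDimensional 𝕜 V] {m d : ℕ} (f : Fin m → V →ᵃ[𝕜] 𝕜)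
    (hV : finrank 𝕜 V ≤ d) : (signPatterns f).ncard ≤ ∑ i ∈ range (d + 1), m.choose i := by
  induction m generalizing d V with
  | zero =>
    calc _ ≤ 1 := Set.ncard_le_one_of_subsingleton _
      _ ≤ _ := by simp [sum_range_succ']
  | succ m ih =>
    set A := signPatterns f
    set Apos := {τ | Fin.cons 1 τ ∈ A}
    set Aneg := {τ | Fin.cons (-1) τ ∈ A}
    have hA : A ⊆ Fin.cons 1 '' Apos ∪ Fin.cons (-1) '' Aneg := by
      intro σ hσ
      obtain ⟨s, τ, rfl⟩ : ∃ s τ, σ = Fin.cons s τ :=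
        ⟨σ 0, Fin.tail σ, (Fin.cons_self_tail σ).symm⟩
      have hs := ne_zero_of_mem_signPatterns hσ 0
      cases s with
      | zero => exact absurd rfl hs
      | neg => exact Or.inr ⟨τ, hσ, rfl⟩
      | pos => exact Or.inl ⟨τ, hσ, rfl⟩
    have hunion : Apos ∪ Aneg ⊆ signPatterns (Fin.tail f) := by
      rintro τ (hτ | hτ) <;> simpa using tail_mem_signPatterns hτ
    have hinter : (Apos ∩ Aneg).ncard ≤ ∑ i ∈ range d, m.choose i := by
      rcases (Apos ∩ Aneg).eq_empty_or_nonempty with hempty | ⟨τ₀, hpos, hneg⟩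
      · simp [hempty]
      obtain ⟨z, hz, -⟩ := exists_zero_of_cons_mem_signPatterns hpos hneg
      obtain ⟨y, hy, -⟩ := hpos
      have hlin : (f 0).linear ≠ 0 := fun h0 => by
        obtain ⟨q, hq⟩ := (f 0).linear_eq_zero_iff_exists_const.1 h0
        exact hy 0 (by rw [hq] at hz ⊢; exact hz)
      have hrank := Module.Dual.finrank_ker_add_one_of_ne_zero hlin
      obtain ⟨e, rfl⟩ : ∃ e, d = e + 1 := ⟨d - 1, by omega⟩
      calc _ ≤ (signPatterns fun i => (Fin.tail f i).comp ((f 0).zeroSetParam z)).ncard :=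
            Set.ncard_le_ncard fun τ hτ => mem_signPatterns_comp_zeroSetParam hτ.1 hτ.2 hz
        _ ≤ _ := ih _ (by omega)
    calc A.ncard ≤ (Fin.cons 1 '' Apos ∪ Fin.cons (-1) '' Aneg).ncard := Set.ncard_le_ncard hA
      _ ≤ Apos.ncard + Aneg.ncard :=
          (Set.ncard_union_le _ _).trans (add_le_add Set.ncard_image_le Set.ncard_image_le)
      _ = (Apos ∪ Aneg).ncard + (Apos ∩ Aneg).ncard := (Set.ncard_union_add_ncard_inter _ _).symm
      _ ≤ _ := add_le_add ((Set.ncard_le_ncard hunion).trans (ih _ hV)) hinter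
      _ = _ := (Nat.sum_range_succ_choose_succ m d).symm

end SignPatterns

section Regions

variable {E ι : Type*} [AddCommGroup E] [Module ℝ E] [TopologicalSpace E] [ContinuousAdd E]
  [ContinuousSMul ℝ E] {f : ι → E →ᵃ[ℝ] ℝ}

theorem connectedComponentIn_eq_signVector_preimage (hf : ∀ i, Continuous (f i)) {x : E}
    (hx : ∀ i, f i x ≠ 0) :
    connectedComponentIn {y | ∀ i, f i y ≠ 0} x = signVector f ⁻¹' {signVector f x} := by
  apply Set.Subset.antisymm
  · intro y hy
    funext i
    exact isPreconnected_connectedComponentIn.sign_eq (hf i).continuousOn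
      (fun z hz => connectedComponentIn_subset {y | ∀ i, f i y ≠ 0} x hz i)
      (mem_connectedComponentIn (F := {y | ∀ i, f i y ≠ 0}) hx) hy
  · refine (convex_signVector_preimage f _).isPreconnected.subset_connectedComponentIn rfl
      fun y hy i => ?_
    have hsign : sign (f i y) = sign (f i x) := congrFun hy i
    rw [← sign_ne_zero, hsign, sign_ne_zero]
    exact hx i

theorem ncard_connectedComponentIn_le_ncard_signPatterns [Finite ι]
    (hf : ∀ i, Continuous (f i)) :
    {C | ∃ x ∈ {y | ∀ i, f i y ≠ 0}, C = connectedComponentIn {y | ∀ i, f i y ≠ 0} x}.ncard ≤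
      (signPatterns f).ncard :=
  calc _ ≤ ((fun σ => signVector f ⁻¹' {σ}) '' signPatterns f).ncard := by
        refine Set.ncard_le_ncard ?_ ((Set.toFinite _).image _)
        rintro C ⟨x, hx, rfl⟩
        exact ⟨_, ⟨x, hx, rfl⟩, (connectedComponentIn_eq_signVector_preimage hf hx).symm⟩
    _ ≤ _ := Set.ncard_image_le (Set.toFinite _)

end Regions

open RealInnerProductSpace

theorem card_regions_le_general {d m : ℕ} (a : Fin m → EuclideanSpace ℝ (Fin d))
    (b : Fin m → ℝ)
    (S : Set (EuclideanSpace ℝ (Fin d))) (hS : S = {x | ∀ i, ⟪a i, x⟫ ≠ b i}) :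
    {C : Set (EuclideanSpace ℝ (Fin d)) |
        ∃ x ∈ S, C = connectedComponentIn S x}.ncard ≤
      ∑ i ∈ Finset.range (d + 1), m.choose i := by
  let f : Fin m → EuclideanSpace ℝ (Fin d) →ᵃ[ℝ] ℝ := fun i =>
    (innerₛₗ ℝ (a i)).toAffineMap - AffineMap.const ℝ _ (b i)
  have hSf : S = {x | ∀ i, f i x ≠ 0} := by
    simp [hS, f, sub_ne_zero]
  have hf : ∀ i, Continuous (f i) := fun i =>
    (continuous_const.inner continuous_id).sub continuous_const
  rw [hSf]
  calc _ ≤ (signPatterns f).ncard := ncard_connectedComponentIn_le_ncard_signPatterns hf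
    _ ≤ _ := ncard_signPatterns_le f finrank_euclideanSpace_fin.le

/-- An arrangement of `m` affine hyperplanes in `ℝᵈ` has at most `Σ_{i=0}^{d} C(m,i)`
connected components in its complement. -/
theorem card_regions_le {d m : ℕ} (a : Fin m → EuclideanSpace ℝ (Fin d))
    (b : Fin m → ℝ) (ha : ∀ i, a i ≠ 0)
    (S : Set (EuclideanSpace ℝ (Fin d))) (hS : S = {x | ∀ i, ⟪a i, x⟫ ≠ b i}) :
    {C : Set (EuclideanSpace ℝ (Fin d)) |
        ∃ x ∈ S, C = connectedComponentIn S x}.ncard ≤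
      ∑ i ∈ Finset.range (d + 1), m.choose i :=
  card_regions_le_general a b S hS
end

section
/- Let P ⊂ ℝᵈ be a polytope and H₁, H₂ affine hyperplanes neither of which contains a vertex of P. If H₁ and H₂ intersect the relative interiors of exactly the same set of edges of P, then the face lattices of P ∩ H₁ and P ∩ H₂ are isomorphic. -/
/-!
For a point `x` of a convex set `P`, `minFace P x` consists of the points `y ∈ P` such that the
segment from `y` through `x` can be prolonged beyond `x` inside `P`: it is the smallest face of `P`
containing `x`. A face `A` of `P ∩ H₁` is sent to the face `H₂ ∩ ⋃_{x ∈ A} minFace P x` of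
`P ∩ H₂`; this is monotone, and the same construction with `H₁, H₂` exchanged inverts it.

The inverse property rests on one fact: every `x ∈ P ∩ H₁` generates the same face of `P` as some
`z ∈ P ∩ H₂`. Indeed `H₁` meets the face `F = minFace P x`, a polytope, without containing a
vertex, so it crosses an edge of `F` (take an extreme point `z` of `F ∩ H₁`: its face meets `H₁`
only at `z`, so it has exactly one vertex on each side of `H₁` and is a segment). That edge is an
edge of `P`, hence also crossed by `H₂`, and `z` is found on the segment from `x` to an endpoint
on the other side of `H₂`.
-/

open RealInnerProductSpace

open Set

/-- `segment ℝ a b` (with `a ≠ b`) is an edge of `P` if it is a (1-dimensional) face of `P`. -/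
def IsEdgeOf {d : ℕ} (P : Set (EuclideanSpace ℝ (Fin d))) (a b : EuclideanSpace ℝ (Fin d)) :
    Prop :=
  a ≠ b ∧ IsExtreme ℝ P (segment ℝ a b)

section MinFace

variable {E : Type*} [AddCommGroup E] [Module ℝ E] {X A : Set E} {x y z : E}

def minFace (X : Set E) (x : E) : Set E :=
  {y ∈ X | ∃ z ∈ X, x ∈ openSegment ℝ y z}

lemma mem_openSegment_iff_eq_add_smul_sub :
    x ∈ openSegment ℝ y z ↔ ∃ t : ℝ, 0 < t ∧ z = x + t • (x - y) := by
  constructor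
  · rintro ⟨a, b, ha, hb, hab, rfl⟩
    obtain rfl : b = 1 - a := by linarith
    refine ⟨a / (1 - a), div_pos ha hb, ?_⟩
    match_scalars <;> field_simp <;> ring
  · rintro ⟨t, ht, rfl⟩
    refine ⟨t / (1 + t), 1 / (1 + t), by positivity, by positivity, by field_simp; ring, ?_⟩
    match_scalars <;> field_simp
    ring

lemma mem_minFace_iff : y ∈ minFace X x ↔ y ∈ X ∧ ∃ t : ℝ, 0 < t ∧ x + t • (x - y) ∈ X := by
  simp only [minFace, mem_ofPred_eq, mem_openSegment_iff_eq_add_smul_sub]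
  constructor
  · rintro ⟨hy, z, hz, t, ht, rfl⟩
    exact ⟨hy, t, ht, hz⟩
  · rintro ⟨hy, t, ht, hz⟩
    exact ⟨hy, _, hz, t, ht, rfl⟩

lemma self_mem_minFace (hx : x ∈ X) : x ∈ minFace X x :=
  ⟨hx, x, hx, by simp⟩

lemma IsExtreme.minFace_subset (hA : IsExtreme ℝ X A) (hx : x ∈ A) : minFace X x ⊆ A :=
  fun _ ⟨hy, _, hz, hxyz⟩ ↦ hA.2 hy hz hx hxyz

lemma isExtreme_minFace (hX : Convex ℝ X) : IsExtreme ℝ X (minFace X x) := by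
  refine ⟨fun _ hy ↦ hy.1, ?_⟩
  rintro p hp q hq _ ⟨-, z, hz, α, α', hα, hα', hαα', rfl⟩ ⟨a, b, ha, hb, hab, rfl⟩
  -- `x` lies on the open segment from `p` to a point `w` of the segment `[q, z]`
  have hαa : 0 < 1 - α * a := by nlinarith
  have hw : (α * b / (1 - α * a)) • q + (α' / (1 - α * a)) • z ∈ X :=
    hX hq hz (by positivity) (by positivity) (by field_simp; linear_combination α * hab + hαα')
  refine ⟨hp, _, hw, α * a, 1 - α * a, by positivity, hαa, by ring, ?_⟩
  match_scalars <;> field_simp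

lemma convex_minFace (hX : Convex ℝ X) : Convex ℝ (minFace X x) := by
  rintro y₁ hy₁ y₂ hy₂ a b ha hb hab
  have hx : x ∈ X := by
    obtain ⟨hy, z, hz, hxz⟩ := hy₁
    exact hX.openSegment_subset hy hz hxz
  rw [mem_minFace_iff] at hy₁ hy₂ ⊢
  obtain ⟨hy₁, t₁, ht₁, h₁⟩ := hy₁
  obtain ⟨hy₂, t₂, ht₂, h₂⟩ := hy₂
  set t := min t₁ t₂
  have ht : 0 < t := lt_min ht₁ ht₂
  have shorten : ∀ {y s}, 0 < s → t ≤ s → x + s • (x - y) ∈ X → x + t • (x - y) ∈ X := by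
    intro y s hs hts h
    have := hX.add_smul_mem hx h ⟨div_nonneg ht.le hs.le, (div_le_one hs).2 hts⟩
    rwa [smul_smul, div_mul_cancel₀ _ hs.ne'] at this
  refine ⟨hX hy₁ hy₂ ha hb hab, t, ht, ?_⟩
  have hcomb : x + t • (x - (a • y₁ + b • y₂)) =
      a • (x + t • (x - y₁)) + b • (x + t • (x - y₂)) := by
    obtain rfl : b = 1 - a := by linarith
    match_scalars <;> ring
  rw [hcomb]
  exact hX (shorten ht₁ (min_le_left _ _) h₁) (shorten ht₂ (min_le_right _ _) h₂) ha hb hab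

lemma mem_minFace_inter_of_apply_eq (f : E →ₗ[ℝ] ℝ) {β : ℝ} (hx : f x = β)
    (hy : y ∈ minFace X x) (hyβ : f y = β) : y ∈ minFace (X ∩ {z | f z = β}) x := by
  rw [mem_minFace_iff] at hy ⊢
  obtain ⟨hy, t, ht, hz⟩ := hy
  refine ⟨⟨hy, hyβ⟩, t, ht, hz, ?_⟩
  simp [hx, hyβ]

lemma exists_mem_openSegment_apply_eq (f : E →ₗ[ℝ] ℝ) {a b : E} {β : ℝ}
    (h : (f a - β) * (f b - β) < 0) : ∃ y ∈ openSegment ℝ a b, f y = β := by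
  have hne : f b - f a ≠ 0 := fun h' ↦ by
    rw [show f b = f a by linarith] at h
    nlinarith [sq_nonneg (f a - β)]
  have hpos : 0 < (f b - β) / (f b - f a) ∧ 0 < (β - f a) / (f b - f a) := by
    rcases mul_neg_iff.1 h with ⟨h₁, h₂⟩ | ⟨h₁, h₂⟩
    · exact ⟨div_pos_of_neg_of_neg (by linarith) (by linarith),
        div_pos_of_neg_of_neg (by linarith) (by linarith)⟩
    · exact ⟨div_pos (by linarith) (by linarith), div_pos (by linarith) (by linarith)⟩
  refine ⟨_, ⟨_, _, hpos.1, hpos.2, by field_simp; ring, rfl⟩, ?_⟩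
  simp only [map_add, map_smul, smul_eq_mul]
  field_simp
  ring

lemma eq_of_mem_openSegment_of_mem_extremePoints {a b c z : E} (ha : a ∈ A)
    (hb : b ∈ A.extremePoints ℝ) (hc : c ∈ A.extremePoints ℝ)
    (hzb : z ∈ openSegment ℝ a b) (hzc : z ∈ openSegment ℝ a c) : b = c := by
  rw [openSegment_eq_image'] at hzb hzc
  obtain ⟨s, hs, rfl⟩ := hzb
  obtain ⟨t, ht, hst⟩ := hzc
  replace hst : t • (c - a) = s • (b - a) := add_left_cancel hst
  wlog hle : s ≤ t generalizing b c s t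
  · exact (this hc hb t ht s hs hst.symm (le_of_not_ge hle)).symm
  rcases hle.lt_or_eq with hlt | rfl
  · have hcab : c ∈ openSegment ℝ a b := by
      rw [openSegment_eq_image']
      refine ⟨s / t, ⟨div_pos hs.1 (hs.1.trans hlt), (div_lt_one (hs.1.trans hlt)).2 hlt⟩, ?_⟩
      show a + (s / t) • (b - a) = c
      rw [div_eq_inv_mul, mul_smul, ← hst, smul_smul, inv_mul_cancel₀ (hs.1.trans hlt).ne',
        one_smul, add_sub_cancel]
    obtain rfl : a = c := hc.2 ha hb.1 hcab
    rw [sub_self, smul_zero, eq_comm, smul_eq_zero, sub_eq_zero] at hst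
    exact hst.resolve_left hs.1.ne'
  · exact (sub_left_injective (smul_right_injective E hs.1.ne' hst)).symm

end MinFace

section Faces

variable {E : Type*} [AddCommGroup E] [Module ℝ E] {W F : Set E}

lemma IsExtreme.subset_convexHull_inter (hW : W.Finite) (hF : IsExtreme ℝ (convexHull ℝ W) F) :
    F ⊆ convexHull ℝ (W ∩ F) := by
  induction W, hW using Set.Finite.induction_on generalizing F with
  | empty => simpa using hF.1
  | @insert a s _ _ ih =>
    intro y hy
    have hFs : IsExtreme ℝ (convexHull ℝ s) (F ∩ convexHull ℝ s) :=
      ⟨inter_subset_right, fun p hp q hq _ hx hseg ↦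
        ⟨hF.2 (convexHull_mono (subset_insert a s) hp)
          (convexHull_mono (subset_insert a s) hq) hx.1 hseg, hp⟩⟩
    have hsF : F ∩ convexHull ℝ s ⊆ convexHull ℝ (insert a s ∩ F) :=
      (ih hFs).trans (convexHull_mono fun v hv ↦ ⟨subset_insert a s hv.1, hv.2.1⟩)
    have haF : a ∈ F → a ∈ convexHull ℝ (insert a s ∩ F) :=
      fun ha ↦ subset_convexHull ℝ _ ⟨mem_insert a s, ha⟩
    rcases s.eq_empty_or_nonempty with rfl | hs
    · obtain rfl : y = a := by simpa using hF.1 hy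
      exact haF hy
    have hy' := hF.1 hy
    rw [convexHull_insert hs, convexJoin_singleton_left, mem_iUnion₂] at hy'
    obtain ⟨p, hp, hyap⟩ := hy'
    by_cases hya : y = a
    · subst hya
      exact haF hy
    by_cases hyp : y = p
    · subst hyp
      exact hsF ⟨hy, hp⟩
    have hyap' : y ∈ openSegment ℝ a p :=
      mem_openSegment_of_ne_left_right (Ne.symm hya) (Ne.symm hyp) hyap
    have hap : a ∈ convexHull ℝ (insert a s) := subset_convexHull ℝ _ (mem_insert a s)
    have hp' : p ∈ convexHull ℝ (insert a s) := convexHull_mono (subset_insert a s) hp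
    exact (convex_convexHull ℝ _).segment_subset (haF (hF.2 hap hp' hy hyap'))
      (hsF ⟨hF.right_mem_of_mem_openSegment hap hp' hy hyap', hp⟩) hyap

lemma IsExtreme.eq_convexHull_inter (hW : W.Finite) (hF : IsExtreme ℝ (convexHull ℝ W) F)
    (hFc : Convex ℝ F) : F = convexHull ℝ (W ∩ F) :=
  (hF.subset_convexHull_inter hW).antisymm (convexHull_min inter_subset_right hFc)

end Faces

section FaceSection

variable {E : Type*} [AddCommGroup E] [Module ℝ E] {P H H₁ H₂ : Set E}

def faceSection (P H A : Set E) : Set E :=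
  {y ∈ H | ∃ x ∈ A, y ∈ minFace P x}

lemma faceSection_mono : Monotone (faceSection P H) :=
  fun _ _ hAB _ ⟨hy, x, hx, hyx⟩ ↦ ⟨hy, x, hAB hx, hyx⟩

lemma isExtreme_faceSection (hP : Convex ℝ P) (A : Set E) :
    IsExtreme ℝ (P ∩ H) (faceSection P H A) := by
  refine ⟨fun y ⟨hy, x, _, hyx⟩ ↦ ⟨(isExtreme_minFace hP).1 hyx, hy⟩, ?_⟩
  rintro p ⟨hp, hpH⟩ q ⟨hq, -⟩ y ⟨-, x, hx, hyx⟩ hseg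
  exact ⟨hpH, x, hx, (isExtreme_minFace hP).2 hp hq hyx hseg⟩

def faceSectionOrderIso (hP : Convex ℝ P)
    (h₁ : ∀ A, IsExtreme ℝ (P ∩ H₁) A → faceSection P H₁ (faceSection P H₂ A) = A)
    (h₂ : ∀ B, IsExtreme ℝ (P ∩ H₂) B → faceSection P H₂ (faceSection P H₁ B) = B) :
    {A // IsExtreme ℝ (P ∩ H₁) A} ≃o {B // IsExtreme ℝ (P ∩ H₂) B} :=
  Equiv.toOrderIso
    { toFun := fun A ↦ ⟨faceSection P H₂ A, isExtreme_faceSection hP _⟩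
      invFun := fun B ↦ ⟨faceSection P H₁ B, isExtreme_faceSection hP _⟩
      left_inv := fun A ↦ Subtype.ext (h₁ A A.2)
      right_inv := fun B ↦ Subtype.ext (h₂ B B.2) }
    (fun _ _ h ↦ faceSection_mono h) (fun _ _ h ↦ faceSection_mono h)

end FaceSection

section Polytope

variable {E : Type*} [NormedAddCommGroup E] [NormedSpace ℝ E] {W F : Set E} {x : E}

lemma IsExtreme.eq_convexHull_extremePoints (hW : W.Finite)
    (hF : IsExtreme ℝ (convexHull ℝ W) F) (hFc : Convex ℝ F) :
    F = convexHull ℝ (F.extremePoints ℝ) := by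
  have hFW := hF.eq_convexHull_inter hW hFc
  have hcompact : IsCompact F := by
    rw [hFW]
    exact (hW.inter_of_left F).isCompact_convexHull ℝ
  have hfinite : (F.extremePoints ℝ).Finite := by
    refine (hW.inter_of_left F).subset ?_
    nth_rw 1 [hFW]
    exact extremePoints_convexHull_subset
  calc F = closure (convexHull ℝ (F.extremePoints ℝ)) :=
        (closure_convexHull_extremePoints hcompact hFc).symm
    _ = convexHull ℝ (F.extremePoints ℝ) := (hfinite.isClosed_convexHull ℝ).closure_eq

lemma exists_edge_crossing (hW : W.Finite) (hF : IsExtreme ℝ (convexHull ℝ W) F)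
    (hFc : Convex ℝ F) (f : E →L[ℝ] ℝ) {β : ℝ} (hne : ∀ v ∈ F.extremePoints ℝ, f v ≠ β)
    (hx : x ∈ F) (hxβ : f x = β) :
    ∃ a b, a ≠ b ∧ IsExtreme ℝ F (segment ℝ a b) ∧ (f a - β) * (f b - β) < 0 := by
  have hcompact : IsCompact (F ∩ {y | f y = β}) := by
    rw [hF.eq_convexHull_inter hW hFc]
    exact ((hW.inter_of_left F).isCompact_convexHull ℝ).inter_right
      (isClosed_eq f.continuous continuous_const)
  obtain ⟨z, hz⟩ := hcompact.extremePoints_nonempty ⟨x, hx, hxβ⟩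
  obtain ⟨hzF, hzβ⟩ := hz.1
  set G := minFace F z
  have hGF : IsExtreme ℝ F G := isExtreme_minFace hFc
  have hGc : Convex ℝ G := convex_minFace hFc
  have hGH : ∀ y ∈ G, f y = β → y = z := fun y hy hyβ ↦
    (isExtreme_singleton.2 hz).minFace_subset rfl
      (mem_minFace_inter_of_apply_eq (f : E →ₗ[ℝ] ℝ) hzβ hy hyβ)
  have hG : G = convexHull ℝ (G.extremePoints ℝ) :=
    (hF.trans hGF).eq_convexHull_extremePoints hW hGc
  have hGne : ∀ e ∈ G.extremePoints ℝ, f e ≠ β :=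
    fun e he ↦ hne e (hGF.extremePoints_subset_extremePoints he)
  have hzG : z ∈ convexHull ℝ (G.extremePoints ℝ) := hG ▸ self_mem_minFace hzF
  obtain ⟨ep, hep, hzep⟩ := ((f : E →ₗ[ℝ] ℝ).convexOn convex_univ).exists_ge_of_mem_convexHull
    (subset_univ _) hzG
  obtain ⟨em, hem, hemz⟩ := ((f : E →ₗ[ℝ] ℝ).concaveOn convex_univ).exists_le_of_mem_convexHull
    (subset_univ _) hzG
  replace hzep : β < f ep := lt_of_le_of_ne (hzβ ▸ hzep) (hGne ep hep).symm
  replace hemz : f em < β := lt_of_le_of_ne (hzβ ▸ hemz) (hGne em hem)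
  have hcross : ∀ a ∈ G, ∀ b ∈ G, (f a - β) * (f b - β) < 0 → z ∈ openSegment ℝ a b := by
    intro a ha b hb hab
    obtain ⟨y, hy, hyβ⟩ := exists_mem_openSegment_apply_eq (f : E →ₗ[ℝ] ℝ) hab
    rwa [← hGH y (hGc.openSegment_subset ha hb hy) hyβ]
  -- an extreme point of `G` on either side of the hyperplane is determined by `z`
  have hpair : G.extremePoints ℝ = {ep, em} := by
    refine Subset.antisymm (fun e he ↦ ?_) (insert_subset hep (singleton_subset_iff.2 hem))
    rcases (hGne e he).lt_or_gt with he' | he'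
    · exact Or.inr (eq_of_mem_openSegment_of_mem_extremePoints hep.1 he hem
        (hcross _ hep.1 _ he.1 (by nlinarith)) (hcross _ hep.1 _ hem.1 (by nlinarith)))
    · exact Or.inl (eq_of_mem_openSegment_of_mem_extremePoints hem.1 he hep
        (hcross _ hem.1 _ he.1 (by nlinarith)) (hcross _ hem.1 _ hep.1 (by nlinarith)))
  refine ⟨ep, em, fun h ↦ by rw [h] at hzep; linarith, ?_, by nlinarith⟩
  rw [← convexHull_pair, ← hpair, ← hG]
  exact hGF

variable {f₁ f₂ : E →L[ℝ] ℝ} {β₁ β₂ : ℝ}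

lemma exists_apply_eq_mem_minFace_and_mem_minFace (hW : W.Finite)
    (hnovert : ∀ v ∈ (convexHull ℝ W).extremePoints ℝ, f₁ v ≠ β₁)
    (hsame : ∀ a b, a ≠ b → IsExtreme ℝ (convexHull ℝ W) (segment ℝ a b) →
      (f₁ a - β₁) * (f₁ b - β₁) < 0 → (f₂ a - β₂) * (f₂ b - β₂) < 0)
    (hx : x ∈ convexHull ℝ W) (hxβ : f₁ x = β₁) :
    ∃ z, f₂ z = β₂ ∧ z ∈ minFace (convexHull ℝ W) x ∧ x ∈ minFace (convexHull ℝ W) z := by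
  have hP : Convex ℝ (convexHull ℝ W) := convex_convexHull ℝ W
  set F := minFace (convexHull ℝ W) x
  have hFP : IsExtreme ℝ (convexHull ℝ W) F := isExtreme_minFace hP
  have hxF : x ∈ F := self_mem_minFace hx
  obtain ⟨a, b, hab, hedge, hcross⟩ := exists_edge_crossing hW hFP (convex_minFace hP) f₁
    (fun v hv ↦ hnovert v (hFP.extremePoints_subset_extremePoints hv)) hxF hxβ
  by_cases hx₂ : f₂ x = β₂
  · exact ⟨x, hx₂, hxF, hxF⟩
  obtain ⟨e, heF, hxe⟩ : ∃ e ∈ F, (f₂ x - β₂) * (f₂ e - β₂) < 0 := by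
    have hcross₂ := hsame a b hab (hFP.trans hedge) hcross
    by_contra! h
    nlinarith [h a (hedge.1 (left_mem_segment ℝ a b)), h b (hedge.1 (right_mem_segment ℝ a b)),
      mul_self_pos.2 (sub_ne_zero.2 hx₂)]
  obtain ⟨z, hz, hzβ⟩ := exists_mem_openSegment_apply_eq (f₂ : E →ₗ[ℝ] ℝ) hxe
  exact ⟨z, hzβ, (convex_minFace hP).openSegment_subset hxF heF hz, hx, e, hFP.1 heF, hz⟩

lemma faceSection_faceSection (hW : W.Finite)
    (hnovert : ∀ v ∈ (convexHull ℝ W).extremePoints ℝ, f₁ v ≠ β₁)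
    (hsame : ∀ a b, a ≠ b → IsExtreme ℝ (convexHull ℝ W) (segment ℝ a b) →
      (f₁ a - β₁) * (f₁ b - β₁) < 0 → (f₂ a - β₂) * (f₂ b - β₂) < 0)
    {A : Set E} (hA : IsExtreme ℝ (convexHull ℝ W ∩ {x | f₁ x = β₁}) A) :
    faceSection (convexHull ℝ W) {x | f₁ x = β₁}
      (faceSection (convexHull ℝ W) {x | f₂ x = β₂} A) = A := by
  have hP : Convex ℝ (convexHull ℝ W) := convex_convexHull ℝ W
  ext y
  constructor
  · rintro ⟨hyβ, z, ⟨-, x, hxA, hzx⟩, hyz⟩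
    have hyx := (isExtreme_minFace hP).minFace_subset hzx hyz
    exact hA.minFace_subset hxA
      (mem_minFace_inter_of_apply_eq (f₁ : E →ₗ[ℝ] ℝ) (hA.1 hxA).2 hyx hyβ)
  · intro hyA
    obtain ⟨z, hzβ, hzy, hyz⟩ :=
      exists_apply_eq_mem_minFace_and_mem_minFace hW hnovert hsame (hA.1 hyA).1 (hA.1 hyA).2
    exact ⟨(hA.1 hyA).2, z, ⟨hzβ, y, hyA, hzy⟩, hyz⟩

end Polytope

theorem comb_equiv_of_same_edges_general {d : ℕ} (V : Finset (EuclideanSpace ℝ (Fin d)))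
    (P : Set (EuclideanSpace ℝ (Fin d)))
    (hP : P = convexHull ℝ (V : Set (EuclideanSpace ℝ (Fin d))))
    (u₁ u₂ : EuclideanSpace ℝ (Fin d)) (β₁ β₂ : ℝ)
    (hnovert₁ : ∀ v ∈ Set.extremePoints ℝ P, ⟪u₁, v⟫ ≠ β₁)
    (hnovert₂ : ∀ v ∈ Set.extremePoints ℝ P, ⟪u₂, v⟫ ≠ β₂)
    (hsame : ∀ a b : EuclideanSpace ℝ (Fin d), IsEdgeOf P a b →
      ((⟪u₁, a⟫ - β₁) * (⟪u₁, b⟫ - β₁) < 0 ↔ (⟪u₂, a⟫ - β₂) * (⟪u₂, b⟫ - β₂) < 0)) :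
    Nonempty
      ({F : Set (EuclideanSpace ℝ (Fin d)) // IsExtreme ℝ (P ∩ {x | ⟪u₁, x⟫ = β₁}) F} ≃o
       {F : Set (EuclideanSpace ℝ (Fin d)) // IsExtreme ℝ (P ∩ {x | ⟪u₂, x⟫ = β₂}) F}) := by
  subst hP
  exact ⟨faceSectionOrderIso (convex_convexHull ℝ _)
    (fun A ↦ faceSection_faceSection (f₁ := innerSL ℝ u₁) (f₂ := innerSL ℝ u₂) V.finite_toSet
      hnovert₁ fun a b hab he ↦ (hsame a b ⟨hab, he⟩).1)
    (fun B ↦ faceSection_faceSection (f₁ := innerSL ℝ u₂) (f₂ := innerSL ℝ u₁) V.finite_toSet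
      hnovert₂ fun a b hab he ↦ (hsame a b ⟨hab, he⟩).2)⟩

/-- If two affine hyperplanes `H₁, H₂`, neither containing a vertex of a polytope `P`,
intersect the relative interiors of exactly the same set of edges of `P`, then the sections
`P ∩ H₁` and `P ∩ H₂` are combinatorially equivalent: their face lattices (posets of extreme
subsets ordered by inclusion) are isomorphic. -/
theorem comb_equiv_of_same_edges {d : ℕ} (V : Finset (EuclideanSpace ℝ (Fin d)))
    (P : Set (EuclideanSpace ℝ (Fin d)))
    (hP : P = convexHull ℝ (V : Set (EuclideanSpace ℝ (Fin d))))
    (u₁ u₂ : EuclideanSpace ℝ (Fin d)) (hu₁ : u₁ ≠ 0) (hu₂ : u₂ ≠ 0) (β₁ β₂ : ℝ)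
    (hnovert₁ : ∀ v ∈ Set.extremePoints ℝ P, ⟪u₁, v⟫ ≠ β₁)
    (hnovert₂ : ∀ v ∈ Set.extremePoints ℝ P, ⟪u₂, v⟫ ≠ β₂)
    (hsame : ∀ a b : EuclideanSpace ℝ (Fin d), IsEdgeOf P a b →
      ((⟪u₁, a⟫ - β₁) * (⟪u₁, b⟫ - β₁) < 0 ↔ (⟪u₂, a⟫ - β₂) * (⟪u₂, b⟫ - β₂) < 0)) :
    Nonempty
      ({F : Set (EuclideanSpace ℝ (Fin d)) // IsExtreme ℝ (P ∩ {x | ⟪u₁, x⟫ = β₁}) F} ≃o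
       {F : Set (EuclideanSpace ℝ (Fin d)) // IsExtreme ℝ (P ∩ {x | ⟪u₂, x⟫ = β₂}) F}) :=
  comb_equiv_of_same_edges_general V P hP u₁ u₂ β₁ β₂ hnovert₁ hnovert₂ hsame
end
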